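/- arXiv:2508.17522 — 5 statements merged into one kernel-verified Lean document; each statement's English description precedes it below -/
import Mathlib

section
/- The second-order cone projection formula: for (t,u) ∈ ℝ × ℝⁿ with ‖u‖₂ ≥ |t| and u ≠ 0, the Euclidean projection of (t,u) onto the second-order cone equals (1/2)(1 + t/‖u‖₂)(‖u‖₂, u). -/
/-- The second-order cone in `ℝ × ℝⁿ`. -/
def secondOrderCone (n : ℕ) : Set (ℝ × EuclideanSpace ℝ (Fin n)) :=
  {p | ‖p.2‖ ≤ p.1}

/-- Squared Euclidean distance on `ℝ × ℝⁿ`. -/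
noncomputable def distSq (n : ℕ) (p q : ℝ × EuclideanSpace ℝ (Fin n)) : ℝ :=
  (p.1 - q.1) ^ 2 + ‖p.2 - q.2‖ ^ 2

/-!
Write `r = ‖u‖` and `w = (s, v)` for a point of the cone. The reverse triangle inequality
gives `‖u - v‖ ≥ r - ‖v‖`, and since `‖v‖ ≤ s` and `t ≤ r`, an elementary identity bounds
`(t - s)² + (r - ‖v‖)²` below by `(r - t)² / 2`, which is exactly the squared distance from
`(t, u)` to the candidate point `((r + t) / 2, ((r + t) / (2r)) u)`. Equality forces
`s = ‖v‖ = (r + t) / 2` and equality in the triangle inequality, hence `v` is a nonnegative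
multiple of `u`, which pins `w` down to the candidate.
-/

/-- The identity behind the lower bound: for `a ≤ s` and `t ≤ r` every term on the right is
nonnegative. -/
lemma two_mul_sq_add_sq_sub_sq (r t s a : ℝ) :
    2 * ((t - s) ^ 2 + (r - a) ^ 2) - (r - t) ^ 2
      = (t + r - s - a) ^ 2 + (s - a) ^ 2 + 2 * (s - a) * (r - t) := by
  ring

lemma half_sq_sub_le_sq_sub_add_sq_sub {r t s a : ℝ} (htr : t ≤ r) (has : a ≤ s) :
    (r - t) ^ 2 / 2 ≤ (t - s) ^ 2 + (r - a) ^ 2 := by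
  nlinarith [two_mul_sq_add_sq_sub_sq r t s a, sq_nonneg (t + r - s - a), sq_nonneg (s - a),
    mul_nonneg (sub_nonneg.2 has) (sub_nonneg.2 htr)]

lemma eq_of_sq_sub_add_sq_sub_eq_half {r t s a : ℝ} (htr : t ≤ r) (has : a ≤ s)
    (h : (t - s) ^ 2 + (r - a) ^ 2 = (r - t) ^ 2 / 2) : a = s ∧ s = (r + t) / 2 := by
  have hsum := two_mul_sq_add_sq_sub_sq r t s a
  have hcross := mul_nonneg (sub_nonneg.2 has) (sub_nonneg.2 htr)
  have hsa : s - a = 0 :=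
    sq_eq_zero_iff.1 <| by nlinarith [sq_nonneg (t + r - s - a), sq_nonneg (s - a)]
  have hmid : t + r - s - a = 0 :=
    sq_eq_zero_iff.1 <| by nlinarith [sq_nonneg (t + r - s - a), sq_nonneg (s - a)]
  constructor <;> linarith

lemma sq_norm_sub_norm_le_sq_norm_sub {E : Type*} [SeminormedAddCommGroup E] (u v : E) :
    (‖u‖ - ‖v‖) ^ 2 ≤ ‖u - v‖ ^ 2 :=
  sq_le_sq.2 <| by simpa using abs_norm_sub_norm_le u v

section InnerProductSpace

variable {E : Type*} [NormedAddCommGroup E] [InnerProductSpace ℝ E]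

/-- Equality here means `⟪u, v⟫ = ‖u‖ ‖v‖`, the equality case of Cauchy–Schwarz. -/
lemma eq_smul_of_sq_norm_sub_eq {u v : E} (hu : u ≠ 0)
    (h : ‖u - v‖ ^ 2 = (‖u‖ - ‖v‖) ^ 2) : v = (‖v‖ / ‖u‖) • u := by
  have hinner : inner ℝ u v = ‖u‖ * ‖v‖ := by
    rw [norm_sub_sq_real] at h
    linarith
  exact ((inner_eq_norm_mul_iff_div (𝕜 := ℝ) hu).1 hinner).symm

end InnerProductSpace

section SecondOrderCone

variable {n : ℕ}

lemma mk_mul_norm_smul_mem_secondOrderCone {c : ℝ} (hc : 0 ≤ c) (u : EuclideanSpace ℝ (Fin n)) :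
    (c * ‖u‖, c • u) ∈ secondOrderCone n := by
  simp only [secondOrderCone, Set.mem_ofPred_eq, norm_smul, Real.norm_eq_abs, abs_of_nonneg hc,
    le_refl]

lemma half_sq_sub_le_distSq {t : ℝ} {u : EuclideanSpace ℝ (Fin n)} (htu : t ≤ ‖u‖)
    {w : ℝ × EuclideanSpace ℝ (Fin n)} (hw : w ∈ secondOrderCone n) :
    (‖u‖ - t) ^ 2 / 2 ≤ distSq n (t, u) w :=
  calc (‖u‖ - t) ^ 2 / 2 ≤ (t - w.1) ^ 2 + (‖u‖ - ‖w.2‖) ^ 2 :=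
        half_sq_sub_le_sq_sub_add_sq_sub htu hw
    _ ≤ distSq n (t, u) w := by
        unfold distSq
        exact add_le_add_right (sq_norm_sub_norm_le_sq_norm_sub u w.2) _

lemma distSq_mk_mul_norm_smul {t c : ℝ} {u : EuclideanSpace ℝ (Fin n)}
    (hc : c * ‖u‖ = (‖u‖ + t) / 2) :
    distSq n (t, u) (c * ‖u‖, c • u) = (‖u‖ - t) ^ 2 / 2 := by
  have hsub : u - c • u = (1 - c) • u := by rw [sub_smul, one_smul]
  simp only [distSq, hsub, norm_smul, Real.norm_eq_abs, mul_pow, sq_abs]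
  linear_combination (2 * c * ‖u‖ - ‖u‖ - t) * hc

lemma eq_of_distSq_eq_half_sq_sub {t c : ℝ} {u : EuclideanSpace ℝ (Fin n)} (hu : u ≠ 0)
    (htu : t ≤ ‖u‖) (hc : c * ‖u‖ = (‖u‖ + t) / 2) {w : ℝ × EuclideanSpace ℝ (Fin n)}
    (hw : w ∈ secondOrderCone n) (h : distSq n (t, u) w = (‖u‖ - t) ^ 2 / 2) :
    w = (c * ‖u‖, c • u) := by
  obtain ⟨s, v⟩ := w
  have hvs : ‖v‖ ≤ s := hw
  have hr : 0 < ‖u‖ := norm_pos_iff.2 hu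
  have htri := sq_norm_sub_norm_le_sq_norm_sub u v
  have hlow := half_sq_sub_le_sq_sub_add_sq_sub (s := s) htu hvs
  unfold distSq at h
  obtain ⟨hnorm, hs⟩ := eq_of_sq_sub_add_sq_sub_eq_half htu hvs (by linarith)
  have hv : v = (‖v‖ / ‖u‖) • u := eq_smul_of_sq_norm_sub_eq hu (by linarith)
  have hcoef : ‖v‖ / ‖u‖ = c := by
    rw [div_eq_iff hr.ne', hc, hnorm, hs]
  rw [hv, hcoef, hc, ← hs]

end SecondOrderCone

/-- For `‖u‖ ≥ |t|` and `u ≠ 0`, the Euclidean projection of `(t,u)` onto the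
second-order cone is `(1/2)(1 + t/‖u‖)(‖u‖, u)`: this point lies in the cone, is the
nearest point of the cone, and is the unique such nearest point. -/
theorem soc_projection_formula (n : ℕ) (t : ℝ) (u : EuclideanSpace ℝ (Fin n))
    (hu : u ≠ 0) (h : |t| ≤ ‖u‖) :
    ((1/2) * (1 + t / ‖u‖) * ‖u‖, ((1/2) * (1 + t / ‖u‖)) • u) ∈ secondOrderCone n ∧
    (∀ w ∈ secondOrderCone n,
      distSq n (t, u) ((1/2) * (1 + t / ‖u‖) * ‖u‖, ((1/2) * (1 + t / ‖u‖)) • u)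
        ≤ distSq n (t, u) w) ∧
    (∀ w ∈ secondOrderCone n, (∀ w' ∈ secondOrderCone n, distSq n (t, u) w ≤ distSq n (t, u) w') →
      w = ((1/2) * (1 + t / ‖u‖) * ‖u‖, ((1/2) * (1 + t / ‖u‖)) • u)) := by
  obtain ⟨hlo, hhi⟩ := abs_le.1 h
  have hr : 0 < ‖u‖ := norm_pos_iff.2 hu
  have hc : (1/2) * (1 + t / ‖u‖) * ‖u‖ = (‖u‖ + t) / 2 := by field_simp
  have hc0 : 0 ≤ (1/2) * (1 + t / ‖u‖) :=
    le_of_mul_le_mul_right (by rw [zero_mul, hc]; linarith) hr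
  have hmem := mk_mul_norm_smul_mem_secondOrderCone hc0 u
  have hdist := distSq_mk_mul_norm_smul hc
  refine ⟨hmem, fun w hw => hdist ▸ half_sq_sub_le_distSq hhi hw, fun w hw hmin => ?_⟩
  exact eq_of_distSq_eq_half_sq_sub hu hhi hc hw <|
    le_antisymm (hdist ▸ hmin _ hmem) (half_sq_sub_le_distSq hhi hw)
end

section
/- For a symmetric matrix Z with eigendecomposition Z = Σᵢ λᵢ vᵢvᵢᵀ (orthonormal vᵢ), the matrix Σᵢ max(λᵢ, 0) vᵢvᵢᵀ is the nearest (in Frobenius norm) positive semidefinite matrix to Z. -/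
/-!
Writing `U` for the orthogonal matrix with rows `vᵢ`, we have `Z = Uᵀ (diagonal λ) U`, and the
Frobenius norm is invariant under `M ↦ U M Uᵀ`. So `‖Z - B‖ = ‖diagonal λ - C‖` with
`C = U B Uᵀ`, which is again positive semidefinite and in particular has nonnegative diagonal.
Entrywise, `(λᵢ - Cᵢᵢ)² ≥ (λᵢ - max λᵢ 0)²` since `Cᵢᵢ ≥ 0`, and `Cᵢⱼ² ≥ 0` off the diagonal;
so `C = diagonal (max λ 0)` is optimal, and at a minimiser every one of these entrywise
inequalities is an equality, which pins down `C`.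
-/

open Matrix

def frobSq (n : ℕ) (M : Matrix (Fin n) (Fin n) ℝ) : ℝ :=
  ∑ i, ∑ j, (M i j) ^ 2

section Frobenius

variable {n : ℕ}

lemma frobSq_eq_trace (M : Matrix (Fin n) (Fin n) ℝ) : frobSq n M = (Mᵀ * M).trace := by
  rw [frobSq, trace, Finset.sum_comm]
  simp only [diag, mul_apply, transpose_apply, sq]

lemma frobSq_transpose_mul_mul {U : Matrix (Fin n) (Fin n) ℝ} (hU : U * Uᵀ = 1)
    (M : Matrix (Fin n) (Fin n) ℝ) : frobSq n (Uᵀ * M * U) = frobSq n M := by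
  have hprod : (Uᵀ * M * U)ᵀ * (Uᵀ * M * U) = Uᵀ * (Mᵀ * M) * U := by
    simp only [transpose_mul, transpose_transpose, Matrix.mul_assoc]
    rw [← Matrix.mul_assoc U Uᵀ, hU, Matrix.one_mul]
  rw [frobSq_eq_trace, frobSq_eq_trace, hprod, trace_mul_cycle, ← Matrix.mul_assoc, hU,
    Matrix.one_mul]

lemma frobSq_le_frobSq_of_sq_le {M N : Matrix (Fin n) (Fin n) ℝ}
    (h : ∀ i j, M i j ^ 2 ≤ N i j ^ 2) : frobSq n M ≤ frobSq n N :=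
  Finset.sum_le_sum fun i _ => Finset.sum_le_sum fun j _ => h i j

lemma sq_eq_sq_of_frobSq_le {M N : Matrix (Fin n) (Fin n) ℝ}
    (h : ∀ i j, M i j ^ 2 ≤ N i j ^ 2) (hle : frobSq n N ≤ frobSq n M) (i j : Fin n) :
    N i j ^ 2 = M i j ^ 2 := by
  have hrow := (Finset.sum_eq_sum_iff_of_le fun i _ =>
    Finset.sum_le_sum fun j _ => h i j).1 (le_antisymm (frobSq_le_frobSq_of_sq_le h) hle)
    i (Finset.mem_univ i)
  exact ((Finset.sum_eq_sum_iff_of_le fun j _ => h i j).1 hrow j (Finset.mem_univ j)).symm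

end Frobenius

lemma sq_sub_max_zero_le (a : ℝ) {c : ℝ} (hc : 0 ≤ c) :
    (a - max a 0) ^ 2 ≤ (a - c) ^ 2 := by
  rcases le_total a 0 with ha | ha
  · rw [max_eq_right ha]; nlinarith
  · rw [max_eq_left ha, sub_self, sq, mul_zero]; positivity

lemma eq_max_zero_of_sq_sub_eq {a c : ℝ} (hc : 0 ≤ c) (h : (a - c) ^ 2 = (a - max a 0) ^ 2) :
    c = max a 0 := by
  rcases le_total a 0 with ha | ha
  · rw [max_eq_right ha] at h ⊢; nlinarith
  · rw [max_eq_left ha, sub_self] at h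
    simpa [max_eq_left ha, sub_eq_zero, eq_comm] using h

section DiagonalProjection

variable {n : ℕ} (d : Fin n → ℝ) {C : Matrix (Fin n) (Fin n) ℝ}

lemma sq_diagonal_sub_posPart_apply_le (hC : ∀ i, 0 ≤ C i i) (i j : Fin n) :
    ((diagonal d - diagonal fun k => max (d k) 0) i j) ^ 2 ≤ ((diagonal d - C) i j) ^ 2 := by
  rcases eq_or_ne i j with rfl | hij
  · simpa only [Matrix.sub_apply, diagonal_apply_eq] using sq_sub_max_zero_le (d i) (hC i)
  · simp only [Matrix.sub_apply, diagonal_apply_ne _ hij, sub_self, ne_eq, OfNat.ofNat_ne_zero,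
      not_false_eq_true, zero_pow]
    positivity

lemma frobSq_diagonal_sub_posPart_le (hC : ∀ i, 0 ≤ C i i) :
    frobSq n (diagonal d - diagonal fun k => max (d k) 0) ≤ frobSq n (diagonal d - C) :=
  frobSq_le_frobSq_of_sq_le (sq_diagonal_sub_posPart_apply_le d hC)

lemma eq_diagonal_posPart_of_frobSq_le (hC : ∀ i, 0 ≤ C i i)
    (hle : frobSq n (diagonal d - C) ≤ frobSq n (diagonal d - diagonal fun k => max (d k) 0)) :
    C = diagonal fun k => max (d k) 0 := by
  ext i j
  have hsq := sq_eq_sq_of_frobSq_le (sq_diagonal_sub_posPart_apply_le d hC) hle i j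
  rcases eq_or_ne i j with rfl | hij
  · simp only [Matrix.sub_apply, diagonal_apply_eq] at hsq ⊢
    exact eq_max_zero_of_sq_sub_eq (hC i) hsq
  · simp only [Matrix.sub_apply, diagonal_apply_ne _ hij] at hsq ⊢
    simpa using hsq

end DiagonalProjection

lemma mul_mul_mul_eq_self_of_mul_eq_one {M : Type*} [Monoid M] {v w : M} (h : w * v = 1)
    (a : M) : w * (v * a * w) * v = a := by
  rw [← mul_assoc, ← mul_assoc, h, one_mul, mul_assoc, h, mul_one]

section Eigenbasis

variable {ι R : Type*} [Fintype ι] [DecidableEq ι] [CommSemiring R] {v : ι → ι → R}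

lemma of_mul_transpose_eq_one (horth : ∀ i j, v i ⬝ᵥ v j = if i = j then (1 : R) else 0) :
    of v * (of v)ᵀ = 1 := by
  ext i j
  simpa [mul_apply, one_apply, dotProduct] using horth i j

lemma sum_smul_vecMulVec_eq (v : ι → ι → R) (f : ι → R) :
    ∑ i, f i • vecMulVec (v i) (v i) = (of v)ᵀ * diagonal f * of v := by
  ext a b
  simp only [Matrix.sum_apply, Matrix.smul_apply, vecMulVec_apply, smul_eq_mul, mul_apply,
    transpose_apply, of_apply, diagonal_apply, mul_ite, mul_zero, Finset.sum_ite_eq',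
    Finset.mem_univ, if_true]
  exact Finset.sum_congr rfl fun i _ => by ring

end Eigenbasis

theorem psd_projection_eigendecomposition_general (n : ℕ)
    (Z : Matrix (Fin n) (Fin n) ℝ)
    (lam : Fin n → ℝ) (v : Fin n → (Fin n → ℝ))
    (horth : ∀ i j, v i ⬝ᵥ v j = if i = j then (1:ℝ) else 0)
    (hdecomp : Z = ∑ i, lam i • vecMulVec (v i) (v i)) :
    (∑ i, max (lam i) 0 • vecMulVec (v i) (v i)).PosSemidef ∧
    (∀ B : Matrix (Fin n) (Fin n) ℝ, B.PosSemidef →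
      frobSq n (Z - ∑ i, max (lam i) 0 • vecMulVec (v i) (v i)) ≤ frobSq n (Z - B)) ∧
    (∀ B : Matrix (Fin n) (Fin n) ℝ, B.PosSemidef →
      (∀ B' : Matrix (Fin n) (Fin n) ℝ, B'.PosSemidef → frobSq n (Z - B) ≤ frobSq n (Z - B')) →
      B = ∑ i, max (lam i) 0 • vecMulVec (v i) (v i)) := by
  set U := of v
  have hU : U * Uᵀ = 1 := of_mul_transpose_eq_one horth
  have hUt : Uᵀ * U = 1 := mul_eq_one_comm.mp hU
  have hZ : Z = Uᵀ * diagonal lam * U := hdecomp.trans (sum_smul_vecMulVec_eq v lam)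
  have hA : ∑ i, max (lam i) 0 • vecMulVec (v i) (v i) =
      Uᵀ * diagonal (fun k => max (lam k) 0) * U := sum_smul_vecMulVec_eq v _
  have hdist (B : Matrix (Fin n) (Fin n) ℝ) :
      frobSq n (Z - B) = frobSq n (diagonal lam - U * B * Uᵀ) := by
    rw [hZ, ← frobSq_transpose_mul_mul hU (diagonal lam - _), Matrix.mul_sub, Matrix.sub_mul,
      mul_mul_mul_eq_self_of_mul_eq_one hUt]
  have hdiag {B : Matrix (Fin n) (Fin n) ℝ} (hB : B.PosSemidef) (i : Fin n) :
      0 ≤ (U * B * Uᵀ) i i := by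
    simpa [conjTranspose_eq_transpose_of_trivial] using
      (hB.mul_mul_conjTranspose_same U).diag_nonneg
  have hApsd : (Uᵀ * diagonal (fun k => max (lam k) 0) * U).PosSemidef := by
    simpa [conjTranspose_eq_transpose_of_trivial] using
      (PosSemidef.diagonal fun k => le_max_right (lam k) 0).conjTranspose_mul_mul_same U
  have hAdist : frobSq n (Z - Uᵀ * diagonal (fun k => max (lam k) 0) * U) =
      frobSq n (diagonal lam - diagonal fun k => max (lam k) 0) := by
    rw [hdist, mul_mul_mul_eq_self_of_mul_eq_one hU]
  rw [hA]
  refine ⟨hApsd, fun B hB => ?_, fun B hB hmin => ?_⟩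
  · rw [hAdist, hdist]
    exact frobSq_diagonal_sub_posPart_le lam (hdiag hB)
  · have hle := hmin _ hApsd
    rw [hAdist, hdist] at hle
    rw [← eq_diagonal_posPart_of_frobSq_le lam (hdiag hB) hle,
      mul_mul_mul_eq_self_of_mul_eq_one hUt]

/-- For a symmetric matrix `Z = Σᵢ λᵢ vᵢvᵢᵀ` with orthonormal `vᵢ`, the matrix
`Σᵢ max(λᵢ,0) vᵢvᵢᵀ` is the nearest (in Frobenius norm) positive semidefinite matrix
to `Z`, and it is the unique such nearest matrix. -/
theorem psd_projection_eigendecomposition (n : ℕ)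
    (Z : Matrix (Fin n) (Fin n) ℝ) (hZ : Z.IsSymm)
    (lam : Fin n → ℝ) (v : Fin n → (Fin n → ℝ))
    (horth : ∀ i j, v i ⬝ᵥ v j = if i = j then (1:ℝ) else 0)
    (hdecomp : Z = ∑ i, lam i • vecMulVec (v i) (v i)) :
    (∑ i, max (lam i) 0 • vecMulVec (v i) (v i)).PosSemidef ∧
    (∀ B : Matrix (Fin n) (Fin n) ℝ, B.PosSemidef →
      frobSq n (Z - ∑ i, max (lam i) 0 • vecMulVec (v i) (v i)) ≤ frobSq n (Z - B)) ∧
    (∀ B : Matrix (Fin n) (Fin n) ℝ, B.PosSemidef →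
      (∀ B' : Matrix (Fin n) (Fin n) ℝ, B'.PosSemidef → frobSq n (Z - B) ≤ frobSq n (Z - B')) →
      B = ∑ i, max (lam i) 0 • vecMulVec (v i) (v i)) :=
  psd_projection_eigendecomposition_general n Z lam v horth hdecomp
end

section
/- If z is a solution of the homogeneous-embedding system −Π°z = Q(Πz) with (Πz)_N = τ > 0, then setting u = Πz, v = −Π°z = Πz − z, the point (x, s, y) = (u_{1:n}/τ, v_{n+1:n+m}/τ, u_{n+1:n+m}/τ) satisfies Ax + s = b, Px + Aᵀy = −q, s ∈ K, y ∈ K*, and sᵀy = 0. -/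
open Matrix

/-- Solution construction from the homogeneous embedding: if `z` solves
`−Π°z = Q(Πz)` with `(Πz)_N = τ > 0`, then, writing `u = Πz = (x̄, ȳ, τ)`
(so `x̄` free, `ȳ ∈ K*`, `τ ≥ 0` since `u ∈ K̄ = ℝⁿ × K* × ℝ₊`) and
`v = −Π°z = Πz − z = (v₁, v₂, v₃) ∈ K̄* = {0}ⁿ × K × ℝ₊` (by Moreau), the equation
`Q u = v` holds, and the point `(x, s, y) = (x̄/τ, v₂/τ, ȳ/τ)` satisfies the KKT
conditions `Ax + s = b`, `Px + Aᵀy = −q`, `s ∈ K`, `y ∈ K*`, `sᵀy = 0`. -/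
theorem homogeneous_embedding_solution_construction (n m : ℕ)
    (P : Matrix (Fin n) (Fin n) ℝ) (A : Matrix (Fin m) (Fin n) ℝ)
    (q : Fin n → ℝ) (b : Fin m → ℝ)
    (K : Set (Fin m → ℝ)) (hK : K.Nonempty) (hcl : IsClosed K) (hconv : Convex ℝ K)
    (hcone : ∀ (c : ℝ), 0 < c → ∀ s ∈ K, c • s ∈ K)
    (hP : P.PosSemidef)
    -- u = Πz = (x̄, ȳ, τ) ∈ K̄ = ℝⁿ × K* × ℝ₊, with τ > 0
    (xb : Fin n → ℝ) (yb : Fin m → ℝ) (τ : ℝ)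
    (hyb : ∀ s ∈ K, (0:ℝ) ≤ s ⬝ᵥ yb) (hτ : 0 < τ)
    -- v = −Π°z = Πz − z ∈ K̄* = {0}ⁿ × K × ℝ₊
    (v₂ : Fin m → ℝ) (v₃ : ℝ) (hv₂ : v₂ ∈ K) (hv₃ : 0 ≤ v₃)
    -- the equation Q(Πz) = −Π°z, componentwise (first component of v is 0)
    (hQ1 : P *ᵥ xb + Aᵀ *ᵥ yb + τ • q = 0)
    (hQ2 : -(A *ᵥ xb) + τ • b = v₂)
    (hQ3 : -(1/τ) * (xb ⬝ᵥ (P *ᵥ xb)) - q ⬝ᵥ xb - b ⬝ᵥ yb = v₃) :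
    A *ᵥ (τ⁻¹ • xb) + τ⁻¹ • v₂ = b ∧
    P *ᵥ (τ⁻¹ • xb) + Aᵀ *ᵥ (τ⁻¹ • yb) = -q ∧
    τ⁻¹ • v₂ ∈ K ∧
    (∀ s ∈ K, (0:ℝ) ≤ s ⬝ᵥ (τ⁻¹ • yb)) ∧
    (τ⁻¹ • v₂) ⬝ᵥ (τ⁻¹ • yb) = 0 := by
  have hτ' : τ ≠ 0 := ne_of_gt hτ
  -- scalar identities
  have haux : xb ⬝ᵥ (Aᵀ *ᵥ yb) = (A *ᵥ xb) ⬝ᵥ yb := by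
    rw [Matrix.dotProduct_mulVec, Matrix.vecMul_transpose]
  have h1 : xb ⬝ᵥ (P *ᵥ xb) + (A *ᵥ xb) ⬝ᵥ yb + τ * (q ⬝ᵥ xb) = 0 := by
    have := congrArg (fun w => xb ⬝ᵥ w) hQ1
    simpa [dotProduct_add, dotProduct_smul, haux, dotProduct_comm xb q] using this
  have h2 : -((A *ᵥ xb) ⬝ᵥ yb) + τ * (b ⬝ᵥ yb) = v₂ ⬝ᵥ yb := by
    have := congrArg (fun w => w ⬝ᵥ yb) hQ2
    simpa [add_dotProduct, smul_dotProduct, neg_dotProduct] using this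
  have h3 : -(xb ⬝ᵥ (P *ᵥ xb)) - τ * (q ⬝ᵥ xb) - τ * (b ⬝ᵥ yb) = τ * v₃ := by
    have := congrArg (fun t => τ * t) hQ3
    field_simp at this
    nlinarith [this]
  have hkey : v₂ ⬝ᵥ yb = -(τ * v₃) := by nlinarith [h1, h2, h3]
  have hge : (0:ℝ) ≤ v₂ ⬝ᵥ yb := hyb v₂ hv₂
  have hzero : v₂ ⬝ᵥ yb = 0 := le_antisymm (by nlinarith) hge
  refine ⟨?_, ?_, ?_, ?_, ?_⟩
  · funext i
    have := congrFun hQ2 i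
    simp [Matrix.mulVec_smul, Pi.add_apply, Pi.smul_apply, Pi.neg_apply] at this ⊢
    field_simp
    linarith [this]
  · funext i
    have := congrFun hQ1 i
    simp [Matrix.mulVec_smul, Pi.add_apply, Pi.smul_apply, Pi.zero_apply, Pi.neg_apply] at this ⊢
    field_simp
    linarith [this]
  · exact hcone τ⁻¹ (by positivity) v₂ hv₂
  · intro s hs
    have := hyb s hs
    have : (0:ℝ) ≤ τ⁻¹ * (s ⬝ᵥ yb) := by positivity
    simpa [dotProduct_smul] using this
  · simp [dotProduct_smul, smul_dotProduct, hzero]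
end

section
/- The map D_θ Q(u,θ)ᵀ given componentwise by P̃ = (1/2)(w_{1:n}xᵀ + x w_{1:n}ᵀ) − (w_N/τ)xxᵀ, Ã = y w_{1:n}ᵀ − w_{n+1:n+m} xᵀ, q̃ = τ w_{1:n} − w_N x, b̃ = τ w_{n+1:n+m} − w_N y is the adjoint of the linear map (P̃, Ã, q̃, b̃) ↦ (P̃x + Ãᵀy + τq̃, −Ãx + τb̃, −(1/τ)xᵀP̃x − q̃ᵀx − b̃ᵀy), with respect to the inner products ⟨(P₁,A₁,q₁,b₁),(P₂,A₂,q₂,b₂)⟩ = tr(P₁P₂) + tr(A₁ᵀA₂) + q₁ᵀq₂ + b₁ᵀb₂ on the parameter space (with P̃ restricted to symmetric matrices) and the standard inner product on ℝᴺ. -/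
/-! Every block pairs off through `tr(M u vᵀ) = (M u)ᵀ v`, and the symmetrisation in `P̂` is
invisible to `tr(P̃ ·)` because `P̃` is symmetric. -/

open Matrix

namespace Matrix

variable {ι κ R : Type*} [Fintype ι] [Fintype κ]

theorem trace_mul_vecMulVec [CommSemiring R] (M : Matrix ι κ R) (a : κ → R) (b : ι → R) :
    (M * vecMulVec a b).trace = (M *ᵥ a) ⬝ᵥ b := by
  rw [mul_vecMulVec, trace_vecMulVec]

theorem IsSymm.mulVec_dotProduct_comm [CommSemiring R] {P : Matrix ι ι R} (hP : P.IsSymm)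
    (u v : ι → R) : (P *ᵥ u) ⬝ᵥ v = (P *ᵥ v) ⬝ᵥ u := by
  rw [dotProduct_comm, dotProduct_mulVec, ← mulVec_transpose, hP.eq]

theorem IsSymm.trace_mul_half_smul_add_vecMulVec [Field R] [NeZero (2 : R)]
    {P : Matrix ι ι R} (hP : P.IsSymm) (u v : ι → R) :
    (P * ((1 / 2 : R) • (vecMulVec u v + vecMulVec v u))).trace = (P *ᵥ v) ⬝ᵥ u := by
  rw [Matrix.mul_smul, trace_smul, Matrix.mul_add, trace_add, trace_mul_vecMulVec,
    trace_mul_vecMulVec, hP.mulVec_dotProduct_comm u v, smul_eq_mul]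
  field_simp
  ring

theorem trace_transpose_mul_vecMulVec_sub [CommRing R] (A : Matrix κ ι R) (x u : ι → R)
    (y w : κ → R) :
    (Aᵀ * (vecMulVec y u - vecMulVec w x)).trace = (Aᵀ *ᵥ y) ⬝ᵥ u - (A *ᵥ x) ⬝ᵥ w := by
  rw [Matrix.mul_sub, trace_sub, trace_mul_vecMulVec, trace_mul_vecMulVec,
    mulVec_transpose A w, ← dotProduct_mulVec, dotProduct_comm w]

end Matrix

theorem DthetaQ_adjoint_general (n m : ℕ)
    (x : Fin n → ℝ) (y : Fin m → ℝ) (τ : ℝ)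
    (Pt : Matrix (Fin n) (Fin n) ℝ) (hPt : Pt.IsSymm)
    (At : Matrix (Fin m) (Fin n) ℝ) (qt : Fin n → ℝ) (bt : Fin m → ℝ)
    (w₁ : Fin n → ℝ) (w₂ : Fin m → ℝ) (wN : ℝ) :
    (Pt *ᵥ x + Atᵀ *ᵥ y + τ • qt) ⬝ᵥ w₁
      + (-(At *ᵥ x) + τ • bt) ⬝ᵥ w₂
      + (-(1/τ) * (x ⬝ᵥ (Pt *ᵥ x)) - qt ⬝ᵥ x - bt ⬝ᵥ y) * wN
    = (Pt * ((1/2 : ℝ) • (vecMulVec w₁ x + vecMulVec x w₁) - (wN / τ) • vecMulVec x x)).trace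
      + (Atᵀ * (vecMulVec y w₁ - vecMulVec w₂ x)).trace
      + qt ⬝ᵥ (τ • w₁ - wN • x)
      + bt ⬝ᵥ (τ • w₂ - wN • y) := by
  rw [Matrix.mul_sub, trace_sub, hPt.trace_mul_half_smul_add_vecMulVec, Matrix.mul_smul,
    trace_smul, trace_mul_vecMulVec, trace_transpose_mul_vecMulVec_sub, dotProduct_comm x]
  simp only [add_dotProduct, neg_dotProduct, smul_dotProduct, dotProduct_sub, dotProduct_smul,
    smul_eq_mul]
  ring

/-- The map `(P̃,Ã,q̃,b̃) ↦ (P̃x + Ãᵀy + τq̃, −Ãx + τb̃, −(1/τ)xᵀP̃x − q̃ᵀx − b̃ᵀy)` has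
adjoint `w ↦ (P̂, Â, q̂, b̂)` with
`P̂ = (1/2)(w₁xᵀ + xw₁ᵀ) − (w_N/τ)xxᵀ`, `Â = yw₁ᵀ − w₂xᵀ`, `q̂ = τw₁ − w_N x`,
`b̂ = τw₂ − w_N y`, with respect to the inner products
`⟨(P₁,A₁,q₁,b₁),(P₂,A₂,q₂,b₂)⟩ = tr(P₁P₂) + tr(A₁ᵀA₂) + q₁ᵀq₂ + b₁ᵀb₂`
(with `P̃` symmetric) and the standard inner product on `ℝᴺ` (`N = n+m+1`, blocks
`w₁, w₂, w_N`). -/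
theorem DthetaQ_adjoint (n m : ℕ)
    (x : Fin n → ℝ) (y : Fin m → ℝ) (τ : ℝ) (hτ : τ ≠ 0)
    (Pt : Matrix (Fin n) (Fin n) ℝ) (hPt : Pt.IsSymm)
    (At : Matrix (Fin m) (Fin n) ℝ) (qt : Fin n → ℝ) (bt : Fin m → ℝ)
    (w₁ : Fin n → ℝ) (w₂ : Fin m → ℝ) (wN : ℝ) :
    (Pt *ᵥ x + Atᵀ *ᵥ y + τ • qt) ⬝ᵥ w₁
      + (-(At *ᵥ x) + τ • bt) ⬝ᵥ w₂
      + (-(1/τ) * (x ⬝ᵥ (Pt *ᵥ x)) - qt ⬝ᵥ x - bt ⬝ᵥ y) * wN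
    = (Pt * ((1/2 : ℝ) • (vecMulVec w₁ x + vecMulVec x w₁) - (wN / τ) • vecMulVec x x)).trace
      + (Atᵀ * (vecMulVec y w₁ - vecMulVec w₂ x)).trace
      + qt ⬝ᵥ (τ • w₁ - wN • x)
      + bt ⬝ᵥ (τ • w₂ - wN • y) :=
  DthetaQ_adjoint_general n m x y τ Pt hPt At qt bt w₁ w₂ wN
end

section
/- For the exponential cone K_exp and a point p = (x,y,z) with x < 0, y < 0, and p ∉ K_exp ∪ K_exp° , the Euclidean projection of p onto K_exp equals (x, 0, max(z, 0)). -/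
/-- The exponential cone in `ℝ³`. -/
def Kexp : Set (ℝ × ℝ × ℝ) :=
  {p | (0 < p.2.1 ∧ p.2.1 * Real.exp (p.1 / p.2.1) ≤ p.2.2) ∨
       (p.2.1 = 0 ∧ p.1 ≤ 0 ∧ 0 ≤ p.2.2)}

/-- The dual exponential cone. -/
def KexpStar : Set (ℝ × ℝ × ℝ) :=
  {p | (p.1 < 0 ∧ -p.1 * Real.exp (p.2.1 / p.1) ≤ Real.exp 1 * p.2.2) ∨
       (p.1 = 0 ∧ 0 ≤ p.2.1 ∧ 0 ≤ p.2.2)}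

/-- The polar exponential cone `K° = −K*`. -/
def KexpPolar : Set (ℝ × ℝ × ℝ) := {p | -p ∈ KexpStar}

/-- Squared Euclidean distance on `ℝ³`. -/
def distSq3 (p q : ℝ × ℝ × ℝ) : ℝ :=
  (p.1 - q.1) ^ 2 + (p.2.1 - q.2.1) ^ 2 + (p.2.2 - q.2.2) ^ 2

lemma Kexp_nonneg {q : ℝ × ℝ × ℝ} (hq : q ∈ Kexp) : 0 ≤ q.2.1 ∧ 0 ≤ q.2.2 := by
  rcases hq with ⟨hb, hc⟩ | ⟨hb, _, hc⟩
  · refine ⟨hb.le, le_trans ?_ hc⟩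
    positivity
  · exact ⟨le_of_eq hb.symm, hc⟩

/-- For `p = (x,y,z)` with `x < 0`, `y < 0`, and `p ∉ K_exp ∪ K_exp°`, the Euclidean
projection of `p` onto `K_exp` is `(x, 0, max z 0)`: this point lies in `K_exp`, is a
nearest point of `K_exp` to `p`, and is the unique such nearest point. -/
theorem exp_cone_projection_neg_neg (x y z : ℝ) (hx : x < 0) (hy : y < 0)
    (hp : (x, y, z) ∉ Kexp ∪ KexpPolar) :
    (x, (0:ℝ), max z 0) ∈ Kexp ∧
    (∀ q ∈ Kexp, distSq3 (x, y, z) (x, 0, max z 0) ≤ distSq3 (x, y, z) q) ∧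
    (∀ q ∈ Kexp, (∀ q' ∈ Kexp, distSq3 (x, y, z) q ≤ distSq3 (x, y, z) q') →
      q = (x, (0:ℝ), max z 0)) := by
  have hmem : (x, (0:ℝ), max z 0) ∈ Kexp := Or.inr ⟨rfl, hx.le, le_max_right z 0⟩
  have hle : ∀ q ∈ Kexp, distSq3 (x, y, z) (x, 0, max z 0) ≤ distSq3 (x, y, z) q := by
    rintro ⟨a, b, c⟩ hq
    obtain ⟨hb, hc⟩ := Kexp_nonneg hq
    simp only [distSq3]
    rcases le_total z 0 with hz | hz
    · rw [max_eq_right hz]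
      nlinarith [sq_nonneg (x - a), mul_nonneg hb (neg_nonneg.mpr hy.le),
        mul_nonneg hc (neg_nonneg.mpr hz), sq_nonneg b, sq_nonneg c]
    · rw [max_eq_left hz]
      nlinarith [sq_nonneg (x - a), mul_nonneg hb (neg_nonneg.mpr hy.le),
        sq_nonneg b, sq_nonneg (z - c)]
  refine ⟨hmem, hle, ?_⟩
  rintro ⟨a, b, c⟩ hq hmin
  obtain ⟨hb, hc⟩ := Kexp_nonneg hq
  have h1 := hmin _ hmem
  have h2 := hle _ hq
  simp only [distSq3] at h1 h2
  have ha : a = x := by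
    rcases le_total z 0 with hz | hz
    · rw [max_eq_right hz] at h1 h2
      nlinarith [sq_nonneg (x - a), mul_nonneg hb (neg_nonneg.mpr hy.le),
        mul_nonneg hc (neg_nonneg.mpr hz), sq_nonneg b, sq_nonneg c]
    · rw [max_eq_left hz] at h1 h2
      nlinarith [sq_nonneg (x - a), mul_nonneg hb (neg_nonneg.mpr hy.le),
        sq_nonneg b, sq_nonneg (z - c)]
  have hb0 : b = 0 := by
    rcases le_total z 0 with hz | hz
    · rw [max_eq_right hz] at h1 h2
      nlinarith [sq_nonneg (x - a), mul_nonneg hb (neg_nonneg.mpr hy.le),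
        mul_nonneg hc (neg_nonneg.mpr hz), sq_nonneg b, sq_nonneg c]
    · rw [max_eq_left hz] at h1 h2
      nlinarith [sq_nonneg (x - a), mul_nonneg hb (neg_nonneg.mpr hy.le),
        sq_nonneg b, sq_nonneg (z - c)]
  have hcval : c = max z 0 := by
    rcases le_total z 0 with hz | hz
    · rw [max_eq_right hz] at h1 ⊢
      nlinarith [sq_nonneg (x - a), mul_nonneg hb (neg_nonneg.mpr hy.le),
        mul_nonneg hc (neg_nonneg.mpr hz), sq_nonneg b, sq_nonneg c]
    · rw [max_eq_left hz] at h1 ⊢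
      nlinarith [sq_nonneg (x - a), mul_nonneg hb (neg_nonneg.mpr hy.le),
        sq_nonneg b, sq_nonneg (z - c)]
  simp [ha, hb0, hcval]
end
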